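/- There exists a probabilistic finite state transducer that computes the relation R₂ = {(w2w, w) : w∈{0,1}*} ⊆ {0,1,2}*×{0,1}* with probability 2/3. -/

import Mathlib

/-!  Probabilistic finite state transducers (pfst), following
Freivalds & Winter, "Quantum Finite State Transducers". -/

section PFSTdefs

variable {Q Γ₁ Γ₂ : Type*}

/-- A probabilistic finite state transducer: a finite state set `Q`, input
alphabet `Γ₁` (with implicit begin/end markers `‡`,`$`), output alphabet `Γ₂`,
row-stochastic transition matrices for every letter and for the two markers,
output functions, an initial state, and disjoint sets of accepting and
rejecting states.  The end-marker matrix carries all probability from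
non-halting states into `acc ∪ rej`. -/
structure PFST (Q Γ₁ Γ₂ : Type*) [Fintype Q] [DecidableEq Q] where
  V : Γ₁ → Matrix Q Q ℝ
  Vbeg : Matrix Q Q ℝ
  Vend : Matrix Q Q ℝ
  out : Γ₁ → Q → List Γ₂
  outBeg : Q → List Γ₂
  outEnd : Q → List Γ₂
  init : Q
  acc : Finset Q
  rej : Finset Q
  acc_disj_rej : Disjoint acc rej
  nonneg : ∀ a q p, 0 ≤ V a q p
  nonnegBeg : ∀ q p, 0 ≤ Vbeg q p
  nonnegEnd : ∀ q p, 0 ≤ Vend q p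
  stochastic : ∀ a q, ∑ p, V a q p = 1
  stochasticBeg : ∀ q, ∑ p, Vbeg q p = 1
  stochasticEnd : ∀ q, ∑ p, Vend q p = 1
  endHalts : ∀ q, q ∉ acc → q ∉ rej → ∀ p, p ∉ acc → p ∉ rej → Vend q p = 0

variable [DecidableEq Γ₂]

/-- Probability that, starting from the (non-halting) state `q`, reading the
remaining list of computation steps (each step being a transition matrix
together with an output function), the machine eventually halts in an
accepting state having produced in total exactly the output word `w`.
In each step, being in state `q`, the word `s.2 q` is appended to the output
tape and the state moves to `p` with probability `s.1 q p`; the computation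
halts as soon as an accepting or rejecting state is entered. -/
def pAccAux (acc non : Finset Q) :
    List (Matrix Q Q ℝ × (Q → List Γ₂)) → Q → List Γ₂ → ℝ
  | [], _, _ => 0
  | s :: rest, q, w =>
      if s.2 q <+: w then
        (∑ p ∈ acc, s.1 q p) * (if w.drop (s.2 q).length = [] then 1 else 0)
          + ∑ p ∈ non, s.1 q p * pAccAux acc non rest p (w.drop (s.2 q).length)
      else 0

variable [Fintype Q] [DecidableEq Q]

/-- The list of computation steps on input `‡ v $`. -/
def PFST.steps (T : PFST Q Γ₁ Γ₂) (v : List Γ₁) :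
    List (Matrix Q Q ℝ × (Q → List Γ₂)) :=
  (T.Vbeg, T.outBeg) :: (v.map fun a => (T.V a, T.out a)) ++ [(T.Vend, T.outEnd)]

/-- `T.prob v w` : the probability that on input `‡ v $` the transducer halts
accepting, with exactly `w` written on the output tape. -/
def PFST.prob (T : PFST Q Γ₁ Γ₂) (v : List Γ₁) (w : List Γ₂) : ℝ :=
  pAccAux T.acc (Finset.univ \ (T.acc ∪ T.rej)) (T.steps v) T.init w

/-- `T` computes the relation `R` with probability `α`. -/
def PFST.Computes (T : PFST Q Γ₁ Γ₂) (R : Set (List Γ₁ × List Γ₂)) (α : ℝ) : Prop :=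
  ∀ v w, ((v, w) ∈ R → α ≤ T.prob v w) ∧ ((v, w) ∉ R → T.prob v w ≤ 1 - α)

/-- `T` computes the relation `R` with isolated cutpoint `α`. -/
def PFST.ComputesCutpoint (T : PFST Q Γ₁ Γ₂) (R : Set (List Γ₁ × List Γ₂)) (α : ℝ) : Prop :=
  ∃ ε > 0, ∀ v w, ((v, w) ∈ R → α + ε ≤ T.prob v w) ∧ ((v, w) ∉ R → T.prob v w ≤ α - ε)

/-- A deterministic finite state transducer: all transition probabilities
are `0` or `1`. -/
def PFST.IsDeterministic (T : PFST Q Γ₁ Γ₂) : Prop :=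
  (∀ a q p, T.V a q p = 0 ∨ T.V a q p = 1) ∧
  (∀ q p, T.Vbeg q p = 0 ∨ T.Vbeg q p = 1) ∧
  (∀ q p, T.Vend q p = 0 ∨ T.Vend q p = 1)

end PFSTdefs

/-- The relation `R₂ = {(w2w, w) : w ∈ {0,1}*} ⊆ {0,1,2}* × {0,1}*`
(the letters `0`, `1` of the output word being embedded into the input
alphabet `Fin 3`). -/
def R₂ : Set (List (Fin 3) × List (Fin 2)) :=
  {p | ∃ w : List (Fin 2),
    p.1 = w.map (Fin.castLE (by norm_num)) ++ [2] ++ w.map (Fin.castLE (by norm_num)) ∧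
    p.2 = w}

/- states: 0 init, 1 a0 (copy before 2), 2 a1 (skip after 2),
   3 b0 (skip before 2), 4 b1 (copy after 2), 5 acc, 6 rej -/

noncomputable def Tm : PFST (Fin 7) (Fin 3) (Fin 2) where
  V c := fun q p =>
    if q = 1 then (if c = 2 then (if p = 2 then 1 else 0) else (if p = 1 then 1 else 0))
    else if q = 2 then (if c = 2 then (if p = 6 then 1 else 0) else (if p = 2 then 1 else 0))
    else if q = 3 then (if c = 2 then (if p = 4 then 1 else 0) else (if p = 3 then 1 else 0))
    else if q = 4 then (if c = 2 then (if p = 6 then 1 else 0) else (if p = 4 then 1 else 0))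
    else (if p = q then 1 else 0)
  Vbeg := fun q p =>
    if q = 0 then (if p = 1 then 1/2 else if p = 3 then 1/2 else 0)
    else (if p = q then 1 else 0)
  Vend := fun q p =>
    if q = 2 ∨ q = 4 then (if p = 5 then 2/3 else if p = 6 then 1/3 else 0)
    else if q = 5 then (if p = 5 then 1 else 0)
    else (if p = 6 then 1 else 0)
  out c q := if q = 1 ∨ q = 4 then (if c = 0 then [0] else if c = 1 then [1] else []) else []
  outBeg _ := []
  outEnd _ := []
  init := 0
  acc := {5}
  rej := {6}
  acc_disj_rej := by decide
  nonneg := by intro a q p; split_ifs <;> norm_num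
  nonnegBeg := by intro q p; split_ifs <;> norm_num
  nonnegEnd := by intro q p; split_ifs <;> norm_num
  stochastic := by
    intro a q
    fin_cases q <;> fin_cases a <;>
      simp [Matrix.of, Fin.sum_univ_seven] <;> norm_num
  stochasticBeg := by
    intro q
    fin_cases q <;> simp [Matrix.of, Fin.sum_univ_seven] <;> norm_num
  stochasticEnd := by
    intro q
    fin_cases q <;> simp [Matrix.of, Fin.sum_univ_seven] <;> norm_num
  endHalts := by
    intro q hq1 hq2 p hp1 hp2
    simp only [Finset.mem_singleton] at hq1 hq2 hp1 hp2
    fin_cases q <;> fin_cases p <;> simp_all []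

@[simp] lemma castLE0 : (Fin.castLE (by norm_num : 2 ≤ 3)) 0 = 0 := rfl
@[simp] lemma castLE1 : (Fin.castLE (by norm_num : 2 ≤ 3)) 1 = 1 := rfl

/-- Project `Fin 3` letters `0`,`1` down to `Fin 2`, dropping `2`s. -/
def down (u : List (Fin 3)) : List (Fin 2) :=
  u.filterMap fun c => if h : (c : ℕ) < 2 then some ⟨c, h⟩ else none

@[simp] lemma down_nil : down [] = [] := rfl
@[simp] lemma down_cons0 (u : List (Fin 3)) : down (0 :: u) = 0 :: down u := rfl
@[simp] lemma down_cons1 (u : List (Fin 3)) : down (1 :: u) = 1 :: down u := rfl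
@[simp] lemma down_cons2 (u : List (Fin 3)) : down (2 :: u) = down u := rfl

lemma down_map (w : List (Fin 2)) :
    down (w.map (Fin.castLE (by norm_num : 2 ≤ 3))) = w := by
  induction w with
  | nil => rfl
  | cons a t ih => fin_cases a <;> simp_all

lemma two_not_mem_map (w : List (Fin 2)) :
    (2 : Fin 3) ∉ w.map (Fin.castLE (by norm_num : 2 ≤ 3)) := by
  intro h
  obtain ⟨a, _, ha⟩ := List.mem_map.1 h
  fin_cases a <;> simp_all

lemma up_down {u : List (Fin 3)} (h : (2 : Fin 3) ∉ u) :
    (down u).map (Fin.castLE (by norm_num : 2 ≤ 3)) = u := by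
  induction u with
  | nil => rfl
  | cons c t ih =>
    have hc : c ≠ 2 := fun e => h (e ▸ List.mem_cons_self)
    have ht : (2 : Fin 3) ∉ t := fun e => h (List.mem_cons_of_mem _ e)
    fin_cases c <;> simp_all

lemma exists_split {v : List (Fin 3)} (h : (2 : Fin 3) ∈ v) :
    ∃ x y, (2 : Fin 3) ∉ x ∧ v = x ++ 2 :: y := by
  induction v with
  | nil => simp at h
  | cons c v ih =>
    by_cases hc : c = 2
    · exact ⟨[], v, by simp, by simp [hc]⟩
    · obtain ⟨x, y, hx, hv⟩ := ih (by
        rcases List.mem_cons.1 h with h | h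
        · exact absurd h.symm hc
        · exact h)
      exact ⟨c :: x, y, by
        simp only [List.mem_cons, not_or]
        exact ⟨fun e => hc e.symm, hx⟩, by simp [hv]⟩

/- evaluation lemmas for the machine, keeping `Tm` itself opaque -/
@[simp] lemma TmV1 (c : Fin 3) (p : Fin 7) :
    Tm.V c 1 p = if c = 2 then (if p = 2 then 1 else 0) else (if p = 1 then 1 else 0) := rfl
@[simp] lemma TmV2 (c : Fin 3) (p : Fin 7) :
    Tm.V c 2 p = if c = 2 then (if p = 6 then 1 else 0) else (if p = 2 then 1 else 0) := rfl
@[simp] lemma TmV3 (c : Fin 3) (p : Fin 7) :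
    Tm.V c 3 p = if c = 2 then (if p = 4 then 1 else 0) else (if p = 3 then 1 else 0) := rfl
@[simp] lemma TmV4 (c : Fin 3) (p : Fin 7) :
    Tm.V c 4 p = if c = 2 then (if p = 6 then 1 else 0) else (if p = 4 then 1 else 0) := rfl
@[simp] lemma TmVbeg0 (p : Fin 7) :
    Tm.Vbeg 0 p = if p = 1 then 1/2 else if p = 3 then 1/2 else 0 := rfl
@[simp] lemma TmVend1 (p : Fin 7) : Tm.Vend 1 p = if p = 6 then 1 else 0 := rfl
@[simp] lemma TmVend2 (p : Fin 7) :
    Tm.Vend 2 p = if p = 5 then 2/3 else if p = 6 then 1/3 else 0 := rfl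
@[simp] lemma TmVend3 (p : Fin 7) : Tm.Vend 3 p = if p = 6 then 1 else 0 := rfl
@[simp] lemma TmVend4 (p : Fin 7) :
    Tm.Vend 4 p = if p = 5 then 2/3 else if p = 6 then 1/3 else 0 := rfl
@[simp] lemma Tmout1 (c : Fin 3) :
    Tm.out c 1 = (if c = 0 then [0] else if c = 1 then [1] else []) := rfl
@[simp] lemma Tmout2 (c : Fin 3) : Tm.out c 2 = [] := rfl
@[simp] lemma Tmout3 (c : Fin 3) : Tm.out c 3 = [] := rfl
@[simp] lemma Tmout4 (c : Fin 3) :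
    Tm.out c 4 = (if c = 0 then [0] else if c = 1 then [1] else []) := rfl
@[simp] lemma TmoutBeg (q : Fin 7) : Tm.outBeg q = [] := rfl
@[simp] lemma TmoutEnd (q : Fin 7) : Tm.outEnd q = [] := rfl
@[simp] lemma Tmacc : Tm.acc = {5} := rfl
@[simp] lemma Tmrej : Tm.rej = {6} := rfl
@[simp] lemma Tminit : Tm.init = 0 := rfl

/-- Middle-plus-end steps of the machine on input `u`. -/
noncomputable abbrev L (u : List (Fin 3)) :
    List (Matrix (Fin 7) (Fin 7) ℝ × (Fin 7 → List (Fin 2))) :=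
  (u.map fun a => (Tm.V a, Tm.out a)) ++ [(Tm.Vend, Tm.outEnd)]

lemma lemA (u : List (Fin 3)) (w : List (Fin 2)) :
    pAccAux {5} {0,1,2,3,4} (L u) 2 w = if (2:Fin 3) ∉ u ∧ w = [] then 2/3 else 0 := by
  induction u generalizing w with
  | nil => cases w <;> simp [pAccAux, L]
  | cons c u ih => fin_cases c <;> simp [pAccAux, L, ih]

lemma lemB (u : List (Fin 3)) (w : List (Fin 2)) :
    pAccAux {5} {0,1,2,3,4} (L u) 4 w = if (2:Fin 3) ∉ u ∧ w = down u then 2/3 else 0 := by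
  induction u generalizing w with
  | nil => cases w <;> simp [pAccAux, L]
  | cons c u ih =>
    fin_cases c
    · rcases w with _ | ⟨a, t⟩
      · simp [pAccAux, L]
      · fin_cases a <;> simp [pAccAux, L, ih]
    · rcases w with _ | ⟨a, t⟩
      · simp [pAccAux, L]
      · fin_cases a <;> simp [pAccAux, L, ih]
    · simp [pAccAux, L]

lemma lemC0 (u : List (Fin 3)) (h : (2:Fin 3) ∉ u) (w : List (Fin 2)) :
    pAccAux {5} {0,1,2,3,4} (L u) 1 w = 0 := by
  induction u generalizing w with
  | nil => simp [pAccAux, L]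
  | cons c u ih =>
    have hc : c ≠ 2 := fun e => h (e ▸ List.mem_cons_self)
    have hu : (2:Fin 3) ∉ u := fun e => h (List.mem_cons_of_mem _ e)
    fin_cases c
    · simp [pAccAux, L, ih hu]
    · simp [pAccAux, L, ih hu]
    · exact absurd rfl hc

lemma lemD0 (u : List (Fin 3)) (h : (2:Fin 3) ∉ u) (w : List (Fin 2)) :
    pAccAux {5} {0,1,2,3,4} (L u) 3 w = 0 := by
  induction u generalizing w with
  | nil => simp [pAccAux, L]
  | cons c u ih =>
    have hc : c ≠ 2 := fun e => h (e ▸ List.mem_cons_self)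
    have hu : (2:Fin 3) ∉ u := fun e => h (List.mem_cons_of_mem _ e)
    fin_cases c
    · simp [pAccAux, L, ih hu]
    · simp [pAccAux, L, ih hu]
    · exact absurd rfl hc

lemma lemC (x : List (Fin 3)) (hx : (2:Fin 3) ∉ x) (y : List (Fin 3)) (w : List (Fin 2)) :
    pAccAux {5} {0,1,2,3,4} (x.map (fun a => (Tm.V a, Tm.out a)) ++ (Tm.V 2, Tm.out 2) :: L y) 1 w
      = if (2:Fin 3) ∉ y ∧ w = down x then 2/3 else 0 := by
  induction x generalizing w with
  | nil => simp [pAccAux, lemA]; exact if_congr Iff.rfl rfl rfl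
  | cons c x ih =>
    have hc : c ≠ 2 := fun e => hx (e ▸ List.mem_cons_self)
    have hx' : (2:Fin 3) ∉ x := fun e => hx (List.mem_cons_of_mem _ e)
    fin_cases c
    · rcases w with _ | ⟨a, t⟩
      · simp [pAccAux]
      · fin_cases a <;> simp [pAccAux, ih hx']
    · rcases w with _ | ⟨a, t⟩
      · simp [pAccAux]
      · fin_cases a <;> simp [pAccAux, ih hx']
    · exact absurd rfl hc

lemma lemD (x : List (Fin 3)) (hx : (2:Fin 3) ∉ x) (y : List (Fin 3)) (w : List (Fin 2)) :
    pAccAux {5} {0,1,2,3,4} (x.map (fun a => (Tm.V a, Tm.out a)) ++ (Tm.V 2, Tm.out 2) :: L y) 3 w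
      = if (2:Fin 3) ∉ y ∧ w = down y then 2/3 else 0 := by
  induction x generalizing w with
  | nil => simp [pAccAux, lemB]
  | cons c x ih =>
    have hc : c ≠ 2 := fun e => hx (e ▸ List.mem_cons_self)
    have hx' : (2:Fin 3) ∉ x := fun e => hx (List.mem_cons_of_mem _ e)
    fin_cases c
    · simp [pAccAux, ih hx']
    · simp [pAccAux, ih hx']
    · exact absurd rfl hc

lemma prob_eq (v : List (Fin 3)) (w : List (Fin 2)) :
    Tm.prob v w = 1/2 * pAccAux {5} {0,1,2,3,4} (L v) 1 w
      + 1/2 * pAccAux {5} {0,1,2,3,4} (L v) 3 w := by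
  have hN : (Finset.univ \ (Tm.acc ∪ Tm.rej)) = ({0,1,2,3,4} : Finset (Fin 7)) := by
    rw [Tmacc, Tmrej]; decide
  rw [PFST.prob, PFST.steps, hN, Tmacc, Tminit]
  simp [pAccAux]

/-- There is a probabilistic finite state transducer computing `R₂`
with probability `2/3`. -/
theorem pfst_computes_R₂ :
    ∃ (n : ℕ) (T : PFST (Fin n) (Fin 3) (Fin 2)), T.Computes R₂ (2/3) := by
  refine ⟨7, Tm, ?_⟩
  intro v w
  constructor
  · rintro ⟨w, hv, rfl⟩
    have hv' : v = (w.map (Fin.castLE (by norm_num : 2 ≤ 3)))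
        ++ 2 :: (w.map (Fin.castLE (by norm_num : 2 ≤ 3))) := by simpa using hv
    have e1 := lemC (w.map (Fin.castLE (by norm_num : 2 ≤ 3))) (two_not_mem_map w)
      (w.map (Fin.castLE (by norm_num : 2 ≤ 3))) w
    have e2 := lemD (w.map (Fin.castLE (by norm_num : 2 ≤ 3))) (two_not_mem_map w)
      (w.map (Fin.castLE (by norm_num : 2 ≤ 3))) w
    rw [prob_eq, hv']
    simp only [L, List.map_append, List.map_cons, List.cons_append, List.append_assoc]
    simp only [L, List.cons_append] at e1 e2
    have hcast : ∀ x : Fin 2, Fin.castLE (by norm_num : 2 ≤ 3) x ≠ 2 := by decide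
    rw [e1, e2]
    norm_num [down_map, hcast]
  · intro hnot
    by_cases h2 : (2:Fin 3) ∈ v
    · obtain ⟨x, y, hx, rfl⟩ := exists_split h2
      have e1 := lemC x hx y w
      have e2 := lemD x hx y w
      rw [prob_eq]
      simp only [L, List.map_append, List.map_cons, List.cons_append, List.append_assoc]
      simp only [L, List.cons_append] at e1 e2
      rw [e1, e2]
      split_ifs with h1 h2'
      · exfalso
        apply hnot
        have ex : x = w.map (Fin.castLE (by norm_num : 2 ≤ 3)) := by
          rw [h1.2]; exact (up_down hx).symm
        have ey : y = w.map (Fin.castLE (by norm_num : 2 ≤ 3)) := by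
          rw [h2'.2]; exact (up_down h1.1).symm
        exact ⟨w, by rw [ex, ey]; simp, rfl⟩
      · norm_num
      · norm_num
      · norm_num
    · rw [prob_eq, lemC0 v h2, lemD0 v h2]; norm_num
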